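/- Suppose there exist constants 0 < c₁ ≤ c₂ such that c₁ · t^{β−1} e^{−a t^{γ}} ≤ φ(t) ≤ c₂ · t^{β−1} e^{−a t^{γ}} for all t > 0, where a, γ > 0 and β > 0. Then there exists C ≥ 1 such that: (i) for all 0 < x ≤ y ≤ 5x, C⁻¹ x^{−1−α} ≤ q(x,y) ≤ C x^{−1−α} and C⁻¹ x^{−1−α} ≤ q(y,x) ≤ C x^{−1−α}; (ii) for all 0 < 5x ≤ y, C⁻¹ y^{−1−α} ≤ q(x,y) ≤ C y^{−1−α}; (iii) for all 0 < 5x ≤ y, q(y,x) lies between C⁻¹ and C times y^{−1−α}(y/x)^{1−β} if 0 < β < 1, between C⁻¹ and C times y^{−1−α} log(y/x) if β = 1, and between C⁻¹ and C times y^{−1−α} if β > 1. -/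

import Mathlib

set_option maxHeartbeats 4000000

open MeasureTheory Set

lemma aux_tail (a γ s : ℝ) (ha : 0 < a) (hγ : 0 < γ) :
    ∃ K : ℝ, 0 ≤ K ∧ ∀ t : ℝ, 1 ≤ t → t ^ s * Real.exp (-a * t ^ γ) ≤ K * t ^ (-2 : ℝ) := by
  set n : ℕ := ⌈(s + 2) / γ⌉₊ with hn
  have hnγ : s + 2 ≤ n * γ := by
    have h1 : (s + 2) / γ ≤ n := Nat.le_ceil _
    calc s + 2 = ((s + 2) / γ) * γ := by field_simp
    _ ≤ n * γ := mul_le_mul_of_nonneg_right h1 hγ.le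
  refine ⟨n.factorial / a ^ n, by positivity, fun t ht => ?_⟩
  have ht0 : (0 : ℝ) < t := lt_of_lt_of_le one_pos ht
  set u : ℝ := a * t ^ γ with hu
  have hu0 : 0 < u := by positivity
  have h2 : u ^ n / n.factorial ≤ Real.exp u := Real.pow_div_factorial_le_exp u hu0.le n
  have h2' : u ^ n ≤ (n.factorial : ℝ) * Real.exp u := by
    rw [div_le_iff₀ (by positivity : (0:ℝ) < (n.factorial : ℝ))] at h2
    linarith
  have h3 : Real.exp (-u) ≤ n.factorial / u ^ n := by
    rw [Real.exp_neg, inv_eq_one_div, div_le_div_iff₀ (Real.exp_pos u) (by positivity)]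
    linarith
  have h4 : (u : ℝ) ^ n = a ^ n * t ^ (γ * n) := by
    rw [hu, mul_pow, ← Real.rpow_natCast (t ^ γ) n, ← Real.rpow_mul ht0.le]
  have h5 : t ^ s * Real.exp (-u) ≤ t ^ s * (n.factorial / u ^ n) :=
    mul_le_mul_of_nonneg_left h3 (by positivity)
  have h6 : t ^ s * ((n.factorial : ℝ) / u ^ n) = (n.factorial / a ^ n) * t ^ (s - γ * n) := by
    rw [h4, Real.rpow_sub ht0]
    field_simp
  have h7 : t ^ (s - γ * n) ≤ t ^ (-2 : ℝ) :=
    Real.rpow_le_rpow_of_exponent_le ht (by nlinarith)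
  have h8 : -a * t ^ γ = -u := by rw [hu]; ring
  rw [h8]
  calc t ^ s * Real.exp (-u) ≤ (n.factorial / a ^ n) * t ^ (s - γ * n) := by rw [← h6]; exact h5
  _ ≤ (n.factorial / a ^ n) * t ^ (-2 : ℝ) := mul_le_mul_of_nonneg_left h7 (by positivity)

/-- Two-sided estimates of the resurrection kernel when
`φ(t) ≍ t^{β-1} e^{-a t^γ}`. -/
theorem q_estimates_exponential_phi
    (α c : ℝ) (hα : α ∈ Set.Ioo (0 : ℝ) 2) (hc : 0 < c)
    (φ : ℝ → ℝ) (hφpos : ∀ t : ℝ, 0 < t → 0 < φ t)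
    (hnorm : ∫ t in Set.Ioi (0 : ℝ), φ t = 1)
    (q : ℝ → ℝ → ℝ)
    (hq : ∀ x y : ℝ, q x y
      = c * ∫ t in Set.Ioi (0 : ℝ), (x + y / t) ^ (-1 - α) * φ t / t)
    (a β γ : ℝ) (ha : 0 < a) (hβ : 0 < β) (hγ : 0 < γ)
    (c₁ c₂ : ℝ) (hc₁ : 0 < c₁) (hc₁₂ : c₁ ≤ c₂)
    (hcomp : ∀ t : ℝ, 0 < t →
      c₁ * (t ^ (β - 1) * Real.exp (-a * t ^ γ)) ≤ φ t
        ∧ φ t ≤ c₂ * (t ^ (β - 1) * Real.exp (-a * t ^ γ))) :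
    ∃ C : ℝ, 1 ≤ C ∧
      (∀ x y : ℝ, 0 < x → x ≤ y → y ≤ 5 * x →
        (C⁻¹ * x ^ (-1 - α) ≤ q x y ∧ q x y ≤ C * x ^ (-1 - α)
          ∧ C⁻¹ * x ^ (-1 - α) ≤ q y x ∧ q y x ≤ C * x ^ (-1 - α)))
      ∧ (∀ x y : ℝ, 0 < x → 5 * x ≤ y →
          (C⁻¹ * y ^ (-1 - α) ≤ q x y ∧ q x y ≤ C * y ^ (-1 - α)))
      ∧ (∀ x y : ℝ, 0 < x → 5 * x ≤ y →
          ((0 < β → β < 1 →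
              C⁻¹ * (y ^ (-1 - α) * (y / x) ^ (1 - β)) ≤ q y x
                ∧ q y x ≤ C * (y ^ (-1 - α) * (y / x) ^ (1 - β)))
            ∧ (β = 1 →
              C⁻¹ * (y ^ (-1 - α) * Real.log (y / x)) ≤ q y x
                ∧ q y x ≤ C * (y ^ (-1 - α) * Real.log (y / x)))
            ∧ (1 < β →
              C⁻¹ * y ^ (-1 - α) ≤ q y x ∧ q y x ≤ C * y ^ (-1 - α)))) := by
  obtain ⟨hα0, hα2⟩ := hα
  have hc₂ : 0 < c₂ := lt_of_lt_of_le hc₁ hc₁₂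
  have hp0 : (-1 - α : ℝ) < 0 := by linarith
  -- φ is integrable on (0, ∞)
  have hφint : IntegrableOn φ (Ioi 0) := by
    by_contra h
    rw [MeasureTheory.integral_undef h] at hnorm
    norm_num at hnorm
  -- upper bound of φ without the exponential on (0,1]
  have hφub1 : ∀ t : ℝ, 0 < t → t ≤ 1 → φ t ≤ c₂ * t ^ (β - 1) := by
    intro t ht ht1
    refine (hcomp t ht).2.trans ?_
    have he : Real.exp (-a * t ^ γ) ≤ 1 := by
      rw [← Real.exp_zero]
      apply Real.exp_le_exp.2
      have : (0:ℝ) ≤ t ^ γ := Real.rpow_nonneg ht.le γ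
      nlinarith
    have hr : (0:ℝ) ≤ t ^ (β - 1) := Real.rpow_nonneg ht.le _
    nlinarith [mul_nonneg (mul_nonneg hc₂.le hr) (sub_nonneg.2 he)]
  -- integrability of t^α φ(t)
  have hMint : IntegrableOn (fun t => t ^ α * φ t) (Ioi 0) := by
    rw [← Ioc_union_Ioi_eq_Ioi (zero_le_one : (0:ℝ) ≤ 1), integrableOn_union]
    constructor
    · refine Integrable.mono (hφint.mono_set Ioc_subset_Ioi_self)
        (((measurable_id.pow measurable_const).aestronglyMeasurable).mul
          (hφint.mono_set Ioc_subset_Ioi_self).1) ?_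
      refine (ae_restrict_iff' measurableSet_Ioc).2 (ae_of_all _ fun t ht => ?_)
      have ht0 : 0 < t := ht.1
      have h1 : t ^ α ≤ 1 := Real.rpow_le_one ht0.le ht.2 hα0.le
      have h2 : 0 ≤ φ t := (hφpos t ht0).le
      rw [Real.norm_eq_abs, Real.norm_eq_abs, abs_of_nonneg (by positivity),
        abs_of_nonneg h2]
      nlinarith [Real.rpow_nonneg ht0.le α]
    · obtain ⟨K, hK0, hK⟩ := aux_tail a γ (α + β - 1) ha hγ
      refine Integrable.mono'
        ((integrableOn_Ioi_rpow_of_lt (by norm_num : (-2:ℝ) < -1) one_pos).const_mul (c₂ * K))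
        (((measurable_id.pow measurable_const).aestronglyMeasurable).mul
          (hφint.mono_set (Ioi_subset_Ioi zero_le_one)).1) ?_
      refine (ae_restrict_iff' measurableSet_Ioi).2 (ae_of_all _ fun t ht => ?_)
      have ht1 : (1:ℝ) ≤ t := le_of_lt ht
      have ht0 : (0:ℝ) < t := lt_of_lt_of_le one_pos ht1
      have h2 : 0 ≤ φ t := (hφpos t ht0).le
      rw [Real.norm_eq_abs, abs_of_nonneg (by positivity)]
      have h3 : t ^ α * φ t ≤ c₂ * (t ^ (α + β - 1) * Real.exp (-a * t ^ γ)) := by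
        have := (hcomp t ht0).2
        have h4 : t ^ α * t ^ (β - 1) = t ^ (α + β - 1) := by
          rw [← Real.rpow_add ht0]; ring_nf
        have h6 := mul_le_mul_of_nonneg_left this (Real.rpow_nonneg ht0.le α)
        have h7 : t ^ α * (c₂ * (t ^ (β - 1) * Real.exp (-a * t ^ γ)))
            = c₂ * (t ^ (α + β - 1) * Real.exp (-a * t ^ γ)) := by rw [← h4]; ring
        linarith
      refine h3.trans ?_
      have h5 := mul_le_mul_of_nonneg_left (hK t ht1) hc₂.le
      linarith
  set M : ℝ := ∫ t in Ioi (0:ℝ), t ^ α * φ t with hM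
  have hM0 : 0 ≤ M := setIntegral_nonneg measurableSet_Ioi fun t ht =>
    mul_nonneg (Real.rpow_nonneg (le_of_lt ht) α) (hφpos t ht).le
  -- the mass of φ on (1,2)
  have hsub12 : Ioo (1:ℝ) 2 ⊆ Ioi 0 := fun t ht => lt_trans one_pos ht.1
  set m : ℝ := ∫ t in Ioo (1:ℝ) 2, φ t with hm
  have hm0 : 0 < m := by
    rw [hm, setIntegral_pos_iff_support_of_nonneg_ae
      ((ae_restrict_iff' measurableSet_Ioo).2 (ae_of_all _ fun t ht => (hφpos t (hsub12 ht)).le))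
      (hφint.mono_set hsub12)]
    refine lt_of_lt_of_le ?_ (measure_mono (subset_inter (fun t ht =>
      (hφpos t (hsub12 ht)).ne' : Ioo (1:ℝ) 2 ⊆ Function.support φ) subset_rfl))
    rw [Real.volume_Ioo]
    norm_num
  -- measurability of the integrand
  have hgm : ∀ X Y : ℝ, AEStronglyMeasurable (fun t => (X + Y / t) ^ (-1 - α) * φ t / t)
      (volume.restrict (Ioi 0)) := by
    intro X Y
    have m1 : Measurable fun t : ℝ => (X + Y / t) ^ (-1 - α) :=
      (measurable_const.add (measurable_const.div measurable_id)).pow measurable_const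
    have := (m1.aestronglyMeasurable.mul hφint.1).mul
      (measurable_inv.aestronglyMeasurable :
        AEStronglyMeasurable (fun t : ℝ => t⁻¹) (volume.restrict (Ioi 0)))
    exact this.congr (ae_of_all _ fun t => by simp [div_eq_mul_inv])
  -- nonnegativity of the integrand
  have hg0 : ∀ X Y t : ℝ, 0 ≤ X → 0 ≤ Y → 0 < t → 0 ≤ (X + Y / t) ^ (-1 - α) * φ t / t := by
    intro X Y t hX hY ht
    have := (hφpos t ht).le
    positivity
  -- pointwise upper bound by Y^{-1-α} t^α φ t
  have hgub : ∀ X Y t : ℝ, 0 ≤ X → 0 < Y → 0 < t →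
      (X + Y / t) ^ (-1 - α) * φ t / t ≤ Y ^ (-1 - α) * (t ^ α * φ t) := by
    intro X Y t hX hY ht
    have h1 : 0 < Y / t := by positivity
    have h2 : (X + Y / t) ^ (-1 - α) ≤ (Y / t) ^ (-1 - α) :=
      Real.rpow_le_rpow_of_nonpos h1 (le_add_of_nonneg_left hX) hp0.le
    have h4 : (Y / t) ^ (-1 - α) * φ t / t = Y ^ (-1 - α) * (t ^ α * φ t) := by
      rw [Real.div_rpow hY.le ht.le, div_mul_eq_mul_div, div_div]
      rw [show t ^ (-1 - α) * t = t ^ (-α) from by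
        nth_rewrite 2 [← Real.rpow_one t]
        rw [← Real.rpow_add ht]
        congr 1
        ring]
      rw [Real.rpow_neg ht.le]
      field_simp
    calc (X + Y / t) ^ (-1 - α) * φ t / t ≤ (Y / t) ^ (-1 - α) * φ t / t := by
          have := (hφpos t ht).le
          gcongr
    _ = Y ^ (-1 - α) * (t ^ α * φ t) := h4
  -- integrability of the integrand
  have hgint : ∀ X Y : ℝ, 0 < X → 0 < Y →
      IntegrableOn (fun t => (X + Y / t) ^ (-1 - α) * φ t / t) (Ioi 0) := by
    intro X Y hX hY
    refine Integrable.mono' (hMint.const_mul (Y ^ (-1 - α))) (hgm X Y) ?_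
    refine (ae_restrict_iff' measurableSet_Ioi).2 (ae_of_all _ fun t ht => ?_)
    rw [Real.norm_eq_abs, abs_of_nonneg (hg0 X Y t hX.le hY.le ht)]
    exact hgub X Y t hX.le hY ht
  -- the generic upper bound
  have hU : ∀ X Y : ℝ, 0 < X → 0 < Y → q X Y ≤ c * M * Y ^ (-1 - α) := by
    intro X Y hX hY
    rw [hq]
    have h1 : (∫ t in Ioi (0:ℝ), (X + Y / t) ^ (-1 - α) * φ t / t)
        ≤ ∫ t in Ioi (0:ℝ), Y ^ (-1 - α) * (t ^ α * φ t) :=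
      setIntegral_mono_on (hgint X Y hX hY) (hMint.const_mul _) measurableSet_Ioi
        (fun t ht => hgub X Y t hX.le hY ht)
    have h2 : (∫ t in Ioi (0:ℝ), Y ^ (-1 - α) * (t ^ α * φ t)) = Y ^ (-1 - α) * M := by
      rw [hM, integral_const_mul]
    calc c * ∫ t in Ioi (0:ℝ), (X + Y / t) ^ (-1 - α) * φ t / t
        ≤ c * (Y ^ (-1 - α) * M) := by
          apply mul_le_mul_of_nonneg_left _ hc.le
          rw [← h2]; exact h1
    _ = c * M * Y ^ (-1 - α) := by ring
  -- the generic lower bound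
  have hL : ∀ X Y : ℝ, 0 < X → 0 < Y → c * (m / 2) * (X + Y) ^ (-1 - α) ≤ q X Y := by
    intro X Y hX hY
    rw [hq]
    have hXY : 0 < X + Y := by linarith
    have h1 : (∫ t in Ioo (1:ℝ) 2, ((X + Y) ^ (-1 - α) * (1/2)) * φ t)
        ≤ ∫ t in Ioo (1:ℝ) 2, (X + Y / t) ^ (-1 - α) * φ t / t := by
      refine setIntegral_mono_on ((hφint.mono_set hsub12).const_mul _)
        ((hgint X Y hX hY).mono_set hsub12) measurableSet_Ioo (fun t ht => ?_)
      have ht0 : 0 < t := hsub12 ht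
      have hφt : 0 ≤ φ t := (hφpos t ht0).le
      have e1 : (X + Y / t) ^ (-1 - α) ≥ (X + Y) ^ (-1 - α) := by
        apply Real.rpow_le_rpow_of_nonpos (by positivity) _ hp0.le
        have : Y / t ≤ Y := by
          rw [div_le_iff₀ ht0]
          nlinarith [ht.1]
        linarith
      have e2 : φ t * (1/2) ≤ φ t / t := by
        have h2t : (1:ℝ)/2 ≤ t⁻¹ := by
          rw [inv_eq_one_div, div_le_div_iff₀ (by norm_num) ht0]
          linarith [ht.2]
        rw [div_eq_mul_inv (φ t) t]
        exact mul_le_mul_of_nonneg_left h2t hφt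
      calc (X + Y) ^ (-1 - α) * (1/2) * φ t = (X + Y) ^ (-1 - α) * (φ t * (1/2)) := by ring
      _ ≤ (X + Y / t) ^ (-1 - α) * (φ t / t) := by
          apply mul_le_mul e1 e2 (by positivity) (by positivity)
      _ = (X + Y / t) ^ (-1 - α) * φ t / t := by ring
    have h2 : (∫ t in Ioo (1:ℝ) 2, ((X + Y) ^ (-1 - α) * (1/2)) * φ t)
        = (X + Y) ^ (-1 - α) * (1/2) * m := by
      rw [hm, integral_const_mul]
    have h3 : (∫ t in Ioo (1:ℝ) 2, (X + Y / t) ^ (-1 - α) * φ t / t)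
        ≤ ∫ t in Ioi (0:ℝ), (X + Y / t) ^ (-1 - α) * φ t / t := by
      refine setIntegral_mono_set (hgint X Y hX hY) ?_ (HasSubset.Subset.eventuallyLE hsub12)
      exact (ae_restrict_iff' measurableSet_Ioi).2
        (ae_of_all _ fun t ht => hg0 X Y t hX.le hY.le ht)
    calc c * (m / 2) * (X + Y) ^ (-1 - α) = c * ((X + Y) ^ (-1 - α) * (1/2) * m) := by ring
    _ ≤ c * ∫ t in Ioi (0:ℝ), (X + Y / t) ^ (-1 - α) * φ t / t := by
        apply mul_le_mul_of_nonneg_left _ hc.le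
        rw [← h2]
        exact h1.trans h3
  -- the main (iii) estimates
  have hiii : ∀ x y : ℝ, 0 < x → 5 * x ≤ y →
      ((β < 1 →
        (c * (2:ℝ)^(-1-α) * (c₁ * Real.exp (-a)) * ((1 - (5:ℝ)^(β-1))/(1-β)))
            * (y ^ (-1-α) * (y/x)^(1-β)) ≤ q y x
          ∧ q y x ≤ (c * (c₂/(α+β) + (c₂/(1-β) + 1))) * (y ^ (-1-α) * (y/x)^(1-β)))
      ∧ (β = 1 →
        (c * (2:ℝ)^(-1-α) * (c₁ * Real.exp (-a))) * (y ^ (-1-α) * Real.log (y/x)) ≤ q y x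
          ∧ q y x ≤ (c * (c₂/(α+1) + (c₂ + 1))) * (y ^ (-1-α) * Real.log (y/x)))
      ∧ (1 < β →
        q y x ≤ (c * (c₂/(α+β) + (c₂/(β-1) + 1))) * y ^ (-1-α))) := by
    intro x y hx h5
    have hy : 0 < y := lt_of_lt_of_le (by linarith) h5
    set ε : ℝ := x / y with hε
    have hε0 : 0 < ε := by positivity
    have hε5 : ε ≤ 1/5 := by
      rw [hε, div_le_div_iff₀ hy (by norm_num)]
      linarith
    have hε1 : ε ≤ 1 := hε5.trans (by norm_num)
    have hyε : y * ε = x := by rw [hε]; field_simp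
    have hg'int := hgint y x hy hx
    -- rpow algebra helpers
    have hrw : ∀ s : ℝ, ε ^ s = x ^ s * y ^ (-s) := by
      intro s
      rw [hε, Real.div_rpow hx.le hy.le, Real.rpow_neg hy.le, div_eq_mul_inv]
    have hyx : ∀ s : ℝ, (y/x) ^ s = y ^ s * x ^ (-s) := by
      intro s
      rw [Real.div_rpow hy.le hx.le, Real.rpow_neg hx.le, div_eq_mul_inv]
    have id3 : ε ^ (β - 1) = (y/x) ^ (1-β) := by
      rw [hrw (β-1), hyx (1-β), show (-(β-1) : ℝ) = 1-β from by ring,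
        show (-(1-β) : ℝ) = β-1 from by ring]
      ring
    have id1 : x ^ (-1-α) * ε ^ (α+β) = y ^ (-1-α) * (y/x) ^ (1-β) := by
      rw [hrw (α+β), hyx (1-β), ← mul_assoc, ← Real.rpow_add hx, ← mul_assoc,
        ← Real.rpow_add hy, show (-1-α+(α+β) : ℝ) = β-1 from by ring,
        show (-(α+β) : ℝ) = -α-β from by ring,
        show (-1-α+(1-β) : ℝ) = -α-β from by ring,
        show (-(1-β) : ℝ) = β-1 from by ring]
      ring
    -- splitting the integral at ε
    have hsplit : (∫ t in Ioi (0:ℝ), (y + x / t) ^ (-1 - α) * φ t / t)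
        = (∫ t in Ioc (0:ℝ) ε, (y + x / t) ^ (-1 - α) * φ t / t)
          + ∫ t in Ioi ε, (y + x / t) ^ (-1 - α) * φ t / t := by
      rw [← setIntegral_union (Ioc_disjoint_Ioi le_rfl) measurableSet_Ioi
        (hg'int.mono_set Ioc_subset_Ioi_self) (hg'int.mono_set (Ioi_subset_Ioi hε0.le)),
        Ioc_union_Ioi_eq_Ioi hε0.le]
    -- upper bound for the piece on (0, ε]
    have hrint : IntegrableOn (fun t : ℝ => t ^ (α+β-1)) (Ioc 0 ε) := by
      rw [← intervalIntegrable_iff_integrableOn_Ioc_of_le hε0.le]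
      exact intervalIntegral.intervalIntegrable_rpow' (by linarith)
    have hA : (∫ t in Ioc (0:ℝ) ε, (y + x / t) ^ (-1 - α) * φ t / t)
        ≤ (x ^ (-1-α) * c₂) * (ε ^ (α+β) / (α+β)) := by
      have hAval : (∫ t in Ioc (0:ℝ) ε, (x ^ (-1-α) * c₂) * t ^ (α+β-1))
          = (x ^ (-1-α) * c₂) * (ε ^ (α+β) / (α+β)) := by
        rw [integral_const_mul]
        congr 1
        rw [← intervalIntegral.integral_of_le hε0.le,
          integral_rpow (Or.inl (by linarith : (-1:ℝ) < α+β-1)),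
          Real.zero_rpow (ne_of_gt (by linarith : (0:ℝ) < α+β-1+1)),
          show (α+β-1+1 : ℝ) = α+β from by ring]
        ring
      rw [← hAval]
      refine setIntegral_mono_on (hg'int.mono_set Ioc_subset_Ioi_self)
        (hrint.const_mul _) measurableSet_Ioc (fun t ht => ?_)
      have ht0 : 0 < t := ht.1
      calc (y + x / t) ^ (-1 - α) * φ t / t ≤ x ^ (-1-α) * (t ^ α * φ t) :=
            hgub y x t hy.le hx ht0
      _ ≤ x ^ (-1-α) * (t ^ α * (c₂ * t ^ (β-1))) := by
          have h9 := hφub1 t ht0 (ht.2.trans hε1)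
          gcongr
          all_goals positivity
      _ = (x ^ (-1-α) * c₂) * t ^ (α+β-1) := by
          rw [show t ^ α * (c₂ * t ^ (β-1)) = c₂ * (t ^ α * t ^ (β-1)) from by ring,
            ← Real.rpow_add ht0, show (α+(β-1) : ℝ) = α+β-1 from by ring]
          ring
    -- integrability of φ(t)/t on (ε, ∞)
    have hφtm : AEStronglyMeasurable (fun t => φ t / t) (volume.restrict (Ioi ε)) := by
      have := (hφint.mono_set (Ioi_subset_Ioi hε0.le)).1.mul
        (measurable_inv.aestronglyMeasurable :
          AEStronglyMeasurable (fun t : ℝ => t⁻¹) (volume.restrict (Ioi ε)))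
      exact this.congr (ae_of_all _ fun t => by simp [div_eq_mul_inv])
    have hφtint : IntegrableOn (fun t => φ t / t) (Ioi ε) := by
      refine Integrable.mono' ((hφint.mono_set (Ioi_subset_Ioi hε0.le)).const_mul ε⁻¹)
        hφtm ?_
      refine (ae_restrict_iff' measurableSet_Ioi).2 (ae_of_all _ fun t ht => ?_)
      have ht0 : 0 < t := lt_trans hε0 ht
      have hφt : 0 ≤ φ t := (hφpos t ht0).le
      rw [Real.norm_eq_abs, abs_of_nonneg (by positivity)]
      have hti : t⁻¹ ≤ ε⁻¹ := inv_anti₀ hε0 ht.le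
      calc φ t / t = φ t * t⁻¹ := div_eq_mul_inv _ _
      _ ≤ φ t * ε⁻¹ := mul_le_mul_of_nonneg_left hti hφt
      _ = ε⁻¹ * φ t := by ring
    -- upper bound for the piece on (ε, ∞)
    have hB : (∫ t in Ioi ε, (y + x / t) ^ (-1 - α) * φ t / t)
        ≤ y ^ (-1-α) * ∫ t in Ioi ε, φ t / t := by
      rw [← integral_const_mul]
      refine setIntegral_mono_on (hg'int.mono_set (Ioi_subset_Ioi hε0.le))
        (hφtint.const_mul _) measurableSet_Ioi (fun t ht => ?_)
      have ht0 : 0 < t := lt_trans hε0 ht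
      have hφt : 0 ≤ φ t := (hφpos t ht0).le
      have e1 : (y + x / t) ^ (-1-α) ≤ y ^ (-1-α) :=
        Real.rpow_le_rpow_of_nonpos hy (le_add_of_nonneg_right (by positivity)) hp0.le
      calc (y + x / t) ^ (-1 - α) * φ t / t = (y + x / t) ^ (-1 - α) * (φ t / t) := by ring
      _ ≤ y ^ (-1-α) * (φ t / t) := mul_le_mul_of_nonneg_right e1 (by positivity)
    -- tail of φ(t)/t beyond 1
    have htail : (∫ t in Ioi (1:ℝ), φ t / t) ≤ 1 := by
      calc (∫ t in Ioi (1:ℝ), φ t / t) ≤ ∫ t in Ioi (1:ℝ), φ t := by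
            refine setIntegral_mono_on (hφtint.mono_set (Ioi_subset_Ioi hε1))
              (hφint.mono_set (Ioi_subset_Ioi zero_le_one)) measurableSet_Ioi
              (fun t ht => ?_)
            exact div_le_self (hφpos t (lt_trans one_pos ht)).le (le_of_lt ht)
      _ ≤ ∫ t in Ioi (0:ℝ), φ t := by
            refine setIntegral_mono_set hφint ?_
              (HasSubset.Subset.eventuallyLE (Ioi_subset_Ioi zero_le_one))
            exact (ae_restrict_iff' measurableSet_Ioi).2
              (ae_of_all _ fun t ht => (hφpos t ht).le)
      _ = 1 := hnorm
    -- the middle integral J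
    have h0mem : (0:ℝ) ∉ uIcc ε 1 := by
      rw [uIcc_of_le hε1]
      exact fun h => absurd h.1 (not_le.2 hε0)
    have hJint : IntegrableOn (fun t : ℝ => t ^ (β-2)) (Ioc ε 1) := by
      rw [← intervalIntegrable_iff_integrableOn_Ioc_of_le hε1]
      exact intervalIntegral.intervalIntegrable_rpow (Or.inr h0mem)
    set J : ℝ := ∫ t in Ioc ε 1, t ^ (β-2) with hJdef
    have hIoc : (∫ t in Ioc ε 1, φ t / t) ≤ c₂ * J := by
      rw [hJdef, ← integral_const_mul]
      refine setIntegral_mono_on (hφtint.mono_set Ioc_subset_Ioi_self)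
        (hJint.const_mul _) measurableSet_Ioc (fun t ht => ?_)
      have ht0 : 0 < t := lt_trans hε0 ht.1
      have hts : t ^ (β-2 : ℝ) = t ^ (β-1 : ℝ) / t := by
        rw [show (β-2:ℝ) = (β-1)-1 from by ring, Real.rpow_sub ht0, Real.rpow_one]
      calc φ t / t ≤ c₂ * t ^ (β-1) / t := by
            have h9 := hφub1 t ht0 ht.2
            gcongr
      _ = c₂ * t ^ (β-2) := by rw [hts, mul_div_assoc]
    have hIsplit : (∫ t in Ioi ε, φ t / t)
        = (∫ t in Ioc ε 1, φ t / t) + ∫ t in Ioi (1:ℝ), φ t / t := by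
      rw [← setIntegral_union (Ioc_disjoint_Ioi le_rfl) measurableSet_Ioi
        (hφtint.mono_set Ioc_subset_Ioi_self) (hφtint.mono_set (Ioi_subset_Ioi hε1)),
        Ioc_union_Ioi_eq_Ioi hε1]
    have hIphi : (∫ t in Ioi ε, φ t / t) ≤ c₂ * J + 1 := by
      rw [hIsplit]
      exact add_le_add hIoc htail
    -- the combined upper bound
    have hup : q y x ≤ c * ((x ^ (-1-α) * c₂) * (ε ^ (α+β) / (α+β))
        + y ^ (-1-α) * (c₂ * J + 1)) := by
      rw [hq, hsplit]
      apply mul_le_mul_of_nonneg_left _ hc.le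
      refine add_le_add hA (hB.trans ?_)
      exact mul_le_mul_of_nonneg_left hIphi (Real.rpow_nonneg hy.le _)
    -- the combined lower bound
    have hlo : c * (((2*y) ^ (-1-α) * (c₁ * Real.exp (-a))) * J) ≤ q y x := by
      rw [hq]
      apply mul_le_mul_of_nonneg_left _ hc.le
      have hsub : Ioc ε 1 ⊆ Ioi (0:ℝ) := fun t ht => lt_trans hε0 ht.1
      have step2 : ((2*y) ^ (-1-α) * (c₁ * Real.exp (-a))) * J
          ≤ ∫ t in Ioc ε 1, (y + x / t) ^ (-1 - α) * φ t / t := by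
        rw [hJdef, ← integral_const_mul]
        refine setIntegral_mono_on (hJint.const_mul _)
          (hg'int.mono_set hsub) measurableSet_Ioc (fun t ht => ?_)
        have ht0 : 0 < t := lt_trans hε0 ht.1
        have hxt : x / t ≤ y := by
          rw [div_le_iff₀ ht0]
          nlinarith [mul_le_mul_of_nonneg_left ht.1.le hy.le]
        have e1 : (2*y) ^ (-1-α) ≤ (y + x / t) ^ (-1-α) :=
          Real.rpow_le_rpow_of_nonpos (by positivity) (by linarith) hp0.le
        have e2 : c₁ * Real.exp (-a) * t ^ (β-2) ≤ φ t / t := by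
          have hexp : Real.exp (-a) ≤ Real.exp (-a * t ^ γ) := by
            apply Real.exp_le_exp.2
            have h1 : t ^ γ ≤ 1 := Real.rpow_le_one ht0.le ht.2 hγ.le
            nlinarith
          have hφlb := (hcomp t ht0).1
          have ht1 : t ^ (β-2 : ℝ) = t ^ (β-1 : ℝ) / t := by
            rw [show (β-2:ℝ) = (β-1)-1 from by ring, Real.rpow_sub ht0, Real.rpow_one]
          have hr1 : (0:ℝ) ≤ t ^ (β-1 : ℝ) := Real.rpow_nonneg ht0.le _
          calc c₁ * Real.exp (-a) * t ^ (β-2)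
              = c₁ * (t ^ (β-1) * Real.exp (-a)) / t := by rw [ht1]; ring
          _ ≤ c₁ * (t ^ (β-1) * Real.exp (-a * t ^ γ)) / t := by gcongr
          _ ≤ φ t / t := by gcongr
        calc (2*y) ^ (-1-α) * (c₁ * Real.exp (-a)) * t ^ (β-2)
            = (2*y) ^ (-1-α) * (c₁ * Real.exp (-a) * t ^ (β-2)) := by ring
        _ ≤ (y + x / t) ^ (-1-α) * (φ t / t) := by
            refine mul_le_mul e1 e2 ?_ ?_
            · positivity
            · positivity
        _ = (y + x / t) ^ (-1 - α) * φ t / t := by ring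
      refine step2.trans ?_
      refine setIntegral_mono_set hg'int ?_ (HasSubset.Subset.eventuallyLE hsub)
      exact (ae_restrict_iff' measurableSet_Ioi).2
        (ae_of_all _ fun t ht => hg0 y x t hy.le hx.le ht)
    refine ⟨?_, ?_, ?_⟩
    · -- β < 1
      intro hβlt
      have h1β : (0:ℝ) < 1 - β := by linarith
      have hu1 : (1:ℝ) ≤ ε ^ (β-1) :=
        Real.one_le_rpow_of_pos_of_le_one_of_nonpos hε0 hε1 (by linarith)
      have hu5 : (5:ℝ) ^ (1-β) ≤ ε ^ (β-1) := by
        have h2 := Real.rpow_le_rpow_of_nonpos hε0 hε5 (by linarith : β - 1 ≤ 0)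
        calc (5:ℝ) ^ (1-β) = (1/5 : ℝ) ^ (β-1) := by
              rw [show (1/5 : ℝ) = 5⁻¹ from by norm_num, Real.inv_rpow (by norm_num),
                ← Real.rpow_neg (by norm_num), show (-(β-1) : ℝ) = 1-β from by ring]
        _ ≤ ε ^ (β-1) := h2
      have h51 : (5:ℝ) ^ (β-1) < 1 :=
        Real.rpow_lt_one_of_one_lt_of_neg (by norm_num) (by linarith)
      have hu51 : (1:ℝ) ≤ ε ^ (β-1) * (5:ℝ) ^ (β-1) := by
        have h3 : (5:ℝ) ^ (1-β) * (5:ℝ) ^ (β-1) = 1 := by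
          rw [← Real.rpow_add (by norm_num : (0:ℝ) < 5),
            show (1-β+(β-1) : ℝ) = 0 from by ring, Real.rpow_zero]
        nlinarith [Real.rpow_nonneg (by norm_num : (0:ℝ) ≤ 5) (β-1)]
      have hJeq : J = (ε ^ (β-1) - 1)/(1-β) := by
        rw [hJdef, ← intervalIntegral.integral_of_le hε1,
          integral_rpow (Or.inr ⟨by intro h; exact (ne_of_lt hβlt) (by linarith), h0mem⟩),
          Real.one_rpow, show (β-2+1 : ℝ) = β-1 from by ring]
        rw [div_eq_div_iff (by linarith : (β-1:ℝ) ≠ 0) (by linarith : (1-β:ℝ) ≠ 0)]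
        ring
      constructor
      · -- lower bound
        have hJge : ((1-(5:ℝ)^(β-1))/(1-β)) * ε ^ (β-1) ≤ J := by
          rw [hJeq, div_mul_eq_mul_div, div_le_div_iff₀ h1β h1β]
          nlinarith [hu51]
        have hfac : (0:ℝ) ≤ c * ((2*y) ^ (-1-α) * (c₁ * Real.exp (-a))) := by positivity
        calc (c * (2:ℝ)^(-1-α) * (c₁ * Real.exp (-a)) * ((1 - (5:ℝ)^(β-1))/(1-β)))
              * (y ^ (-1-α) * (y/x)^(1-β))
            = (c * ((2*y) ^ (-1-α) * (c₁ * Real.exp (-a))))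
              * (((1-(5:ℝ)^(β-1))/(1-β)) * ε ^ (β-1)) := by
              rw [Real.mul_rpow (by norm_num : (0:ℝ) ≤ 2) hy.le, ← id3]
              ring
        _ ≤ (c * ((2*y) ^ (-1-α) * (c₁ * Real.exp (-a)))) * J :=
            mul_le_mul_of_nonneg_left hJge hfac
        _ = c * (((2*y) ^ (-1-α) * (c₁ * Real.exp (-a))) * J) := by ring
        _ ≤ q y x := hlo
      · -- upper bound
        have hJle : J ≤ ε ^ (β-1)/(1-β) := by
          rw [hJeq]
          have h6 : ε ^ (β-1) - 1 ≤ ε ^ (β-1) := by linarith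
          exact div_le_div_of_nonneg_right h6 h1β.le
        have hterm1 : (x ^ (-1-α) * c₂) * (ε ^ (α+β) / (α+β))
            = (c₂/(α+β)) * (y ^ (-1-α) * (y/x)^(1-β)) := by
          rw [← id1]; ring
        have hterm2 : y ^ (-1-α) * (c₂ * J + 1)
            ≤ (c₂/(1-β) + 1) * (y ^ (-1-α) * (y/x)^(1-β)) := by
          have h1 : c₂ * J + 1 ≤ (c₂/(1-β) + 1) * ε ^ (β-1) := by
            have h2 : c₂ * J ≤ (c₂/(1-β)) * ε ^ (β-1) := by
              calc c₂ * J ≤ c₂ * (ε ^ (β-1)/(1-β)) := mul_le_mul_of_nonneg_left hJle hc₂.le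
              _ = (c₂/(1-β)) * ε ^ (β-1) := by ring
            nlinarith
          calc y ^ (-1-α) * (c₂ * J + 1)
              ≤ y ^ (-1-α) * ((c₂/(1-β) + 1) * ε ^ (β-1)) :=
                mul_le_mul_of_nonneg_left h1 (Real.rpow_nonneg hy.le _)
          _ = (c₂/(1-β) + 1) * (y ^ (-1-α) * ε ^ (β-1)) := by ring
          _ = (c₂/(1-β) + 1) * (y ^ (-1-α) * (y/x)^(1-β)) := by rw [id3]
        calc q y x ≤ c * ((x ^ (-1-α) * c₂) * (ε ^ (α+β) / (α+β))
              + y ^ (-1-α) * (c₂ * J + 1)) := hup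
        _ ≤ c * ((c₂/(α+β)) * (y ^ (-1-α) * (y/x)^(1-β))
              + (c₂/(1-β) + 1) * (y ^ (-1-α) * (y/x)^(1-β))) := by
            apply mul_le_mul_of_nonneg_left _ hc.le
            rw [hterm1]
            exact add_le_add le_rfl hterm2
        _ = (c * (c₂/(α+β) + (c₂/(1-β) + 1))) * (y ^ (-1-α) * (y/x)^(1-β)) := by ring
    · -- β = 1
      intro hβ1
      subst hβ1
      have hJ1 : J = Real.log (y/x) := by
        rw [hJdef, ← intervalIntegral.integral_of_le hε1]
        simp_rw [show ((1:ℝ)-2 : ℝ) = -1 from by norm_num, Real.rpow_neg_one]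
        rw [integral_inv h0mem, hε, one_div_div]
      have hlog1 : (1:ℝ) ≤ Real.log (y/x) := by
        have h5le : (5:ℝ) ≤ y/x := by rw [le_div_iff₀ hx]; linarith
        have h2 : Real.log 5 ≤ Real.log (y/x) := by
          apply Real.log_le_log (by norm_num) h5le
        have h3 : (1:ℝ) < Real.log 5 := by
          rw [← Real.log_exp 1]
          apply Real.log_lt_log (Real.exp_pos 1)
          calc Real.exp 1 < 2.7182818286 := Real.exp_one_lt_d9
          _ < 5 := by norm_num
        linarith
      have id2 : x ^ (-1-α) * ε ^ (α+1) = y ^ (-1-α) := by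
        rw [hrw (α+1), ← mul_assoc, ← Real.rpow_add hx,
          show (-1-α+(α+1) : ℝ) = 0 from by ring, Real.rpow_zero, one_mul,
          show (-(α+1) : ℝ) = -1-α from by ring]
      constructor
      · -- lower bound
        calc (c * (2:ℝ)^(-1-α) * (c₁ * Real.exp (-a))) * (y ^ (-1-α) * Real.log (y/x))
            = c * (((2*y) ^ (-1-α) * (c₁ * Real.exp (-a))) * J) := by
              rw [hJ1, Real.mul_rpow (by norm_num : (0:ℝ) ≤ 2) hy.le]
              ring
        _ ≤ q y x := hlo
      · -- upper bound
        have hterm1 : (x ^ (-1-α) * c₂) * (ε ^ (α+1) / (α+1))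
            ≤ (c₂/(α+1)) * (y ^ (-1-α) * Real.log (y/x)) := by
          have he1 : (x ^ (-1-α) * c₂) * (ε ^ (α+1) / (α+1)) = (c₂/(α+1)) * y ^ (-1-α) := by
            rw [← id2]; ring
          rw [he1]
          have h4 : (0:ℝ) ≤ (c₂/(α+1)) * y ^ (-1-α) := by positivity
          nlinarith
        have hterm2 : y ^ (-1-α) * (c₂ * J + 1)
            ≤ (c₂ + 1) * (y ^ (-1-α) * Real.log (y/x)) := by
          rw [hJ1]
          have h4 : (0:ℝ) ≤ y ^ (-1-α) := Real.rpow_nonneg hy.le _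
          nlinarith [mul_le_mul_of_nonneg_left hlog1 (mul_nonneg h4 (by linarith : (0:ℝ) ≤ 1))]
        calc q y x ≤ c * ((x ^ (-1-α) * c₂) * (ε ^ (α+1) / (α+1))
              + y ^ (-1-α) * (c₂ * J + 1)) := hup
        _ ≤ c * ((c₂/(α+1)) * (y ^ (-1-α) * Real.log (y/x))
              + (c₂ + 1) * (y ^ (-1-α) * Real.log (y/x))) := by
            apply mul_le_mul_of_nonneg_left _ hc.le
            exact add_le_add hterm1 hterm2
        _ = (c * (c₂/(α+1) + (c₂ + 1))) * (y ^ (-1-α) * Real.log (y/x)) := by ring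
    · -- β > 1
      intro hβgt
      have hβ1 : (0:ℝ) < β - 1 := by linarith
      have hJle : J ≤ 1/(β-1) := by
        have hJeq : J = (1 - ε ^ (β-1))/(β-1) := by
          rw [hJdef, ← intervalIntegral.integral_of_le hε1,
            integral_rpow (Or.inr ⟨by intro h; exact (ne_of_gt hβgt) (by linarith), h0mem⟩),
            Real.one_rpow, show (β-2+1 : ℝ) = β-1 from by ring]
        rw [hJeq]
        have h6 : 1 - ε ^ (β-1) ≤ 1 := by nlinarith [Real.rpow_nonneg hε0.le (β-1)]
        exact div_le_div_of_nonneg_right h6 hβ1.le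
      have hterm1 : (x ^ (-1-α) * c₂) * (ε ^ (α+β) / (α+β))
          ≤ (c₂/(α+β)) * y ^ (-1-α) := by
        have he1 : (x ^ (-1-α) * c₂) * (ε ^ (α+β) / (α+β))
            = (c₂/(α+β)) * (y ^ (-1-α) * (y/x)^(1-β)) := by rw [← id1]; ring
        rw [he1]
        have h2 : (y/x)^(1-β : ℝ) ≤ 1 := by
          apply Real.rpow_le_one_of_one_le_of_nonpos
          · rw [le_div_iff₀ hx]; linarith
          · linarith
        have h3 : (0:ℝ) ≤ y ^ (-1-α) := Real.rpow_nonneg hy.le _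
        have h4 : (0:ℝ) ≤ c₂/(α+β) := by positivity
        have h5 : y ^ (-1-α) * (y/x)^(1-β) ≤ y ^ (-1-α) := by nlinarith
        exact mul_le_mul_of_nonneg_left h5 h4
      have hterm2 : y ^ (-1-α) * (c₂ * J + 1) ≤ (c₂/(β-1) + 1) * y ^ (-1-α) := by
        have h3 : (0:ℝ) ≤ y ^ (-1-α) := Real.rpow_nonneg hy.le _
        have h5 : c₂ * J ≤ c₂/(β-1) := by
          calc c₂ * J ≤ c₂ * (1/(β-1)) := mul_le_mul_of_nonneg_left hJle hc₂.le
          _ = c₂/(β-1) := by ring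
        nlinarith
      calc q y x ≤ c * ((x ^ (-1-α) * c₂) * (ε ^ (α+β) / (α+β))
            + y ^ (-1-α) * (c₂ * J + 1)) := hup
      _ ≤ c * ((c₂/(α+β)) * y ^ (-1-α) + (c₂/(β-1) + 1) * y ^ (-1-α)) := by
          apply mul_le_mul_of_nonneg_left _ hc.le
          exact add_le_add hterm1 hterm2
      _ = (c * (c₂/(α+β) + (c₂/(β-1) + 1))) * y ^ (-1-α) := by ring
  -- constants
  set K1 : ℝ := c * M with hK1
  set K2 : ℝ := c * (m / 2) * (6:ℝ) ^ (-1-α) with hK2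
  set K3 : ℝ := c * (m / 2) * (2:ℝ) ^ (-1-α) with hK3
  set K4 : ℝ := c * (c₂/(α+β) + (c₂/(1-β) + 1)) with hK4
  set K5 : ℝ := c * (2:ℝ)^(-1-α) * (c₁ * Real.exp (-a)) * ((1 - (5:ℝ)^(β-1))/(1-β)) with hK5
  set K6 : ℝ := c * (c₂/(α+1) + (c₂ + 1)) with hK6
  set K7 : ℝ := c * (2:ℝ)^(-1-α) * (c₁ * Real.exp (-a)) with hK7
  set K8 : ℝ := c * (c₂/(α+β) + (c₂/(β-1) + 1)) with hK8
  set D : ℝ := 1 + (|K1| + |K2⁻¹| + |K3⁻¹| + |K4| + |K5⁻¹| + |K6| + |K7⁻¹| + |K8|) with hD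
  have hD1 : (1:ℝ) ≤ D := by
    rw [hD]
    linarith [abs_nonneg K1, abs_nonneg K2⁻¹, abs_nonneg K3⁻¹, abs_nonneg K4,
      abs_nonneg K5⁻¹, abs_nonneg K6, abs_nonneg K7⁻¹, abs_nonneg K8]
  have hD0 : (0:ℝ) < D := lt_of_lt_of_le one_pos hD1
  have hK1D : K1 ≤ D := by
    rw [hD]
    linarith [le_abs_self K1, abs_nonneg K2⁻¹, abs_nonneg K3⁻¹, abs_nonneg K4,
      abs_nonneg K5⁻¹, abs_nonneg K6, abs_nonneg K7⁻¹, abs_nonneg K8]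
  have hK4D : K4 ≤ D := by
    rw [hD]
    linarith [le_abs_self K4, abs_nonneg K2⁻¹, abs_nonneg K3⁻¹, abs_nonneg K1,
      abs_nonneg K5⁻¹, abs_nonneg K6, abs_nonneg K7⁻¹, abs_nonneg K8]
  have hK6D : K6 ≤ D := by
    rw [hD]
    linarith [le_abs_self K6, abs_nonneg K2⁻¹, abs_nonneg K3⁻¹, abs_nonneg K4,
      abs_nonneg K5⁻¹, abs_nonneg K1, abs_nonneg K7⁻¹, abs_nonneg K8]
  have hK8D : K8 ≤ D := by
    rw [hD]
    linarith [le_abs_self K8, abs_nonneg K2⁻¹, abs_nonneg K3⁻¹, abs_nonneg K4,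
      abs_nonneg K5⁻¹, abs_nonneg K6, abs_nonneg K7⁻¹, abs_nonneg K1]
  have hK2D : K2⁻¹ ≤ D := by
    rw [hD]
    linarith [le_abs_self K2⁻¹, abs_nonneg K1, abs_nonneg K3⁻¹, abs_nonneg K4,
      abs_nonneg K5⁻¹, abs_nonneg K6, abs_nonneg K7⁻¹, abs_nonneg K8]
  have hK3D : K3⁻¹ ≤ D := by
    rw [hD]
    linarith [le_abs_self K3⁻¹, abs_nonneg K1, abs_nonneg K2⁻¹, abs_nonneg K4,
      abs_nonneg K5⁻¹, abs_nonneg K6, abs_nonneg K7⁻¹, abs_nonneg K8]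
  have hK5D : K5⁻¹ ≤ D := by
    rw [hD]
    linarith [le_abs_self K5⁻¹, abs_nonneg K1, abs_nonneg K2⁻¹, abs_nonneg K4,
      abs_nonneg K3⁻¹, abs_nonneg K6, abs_nonneg K7⁻¹, abs_nonneg K8]
  have hK7D : K7⁻¹ ≤ D := by
    rw [hD]
    linarith [le_abs_self K7⁻¹, abs_nonneg K1, abs_nonneg K2⁻¹, abs_nonneg K4,
      abs_nonneg K3⁻¹, abs_nonneg K6, abs_nonneg K5⁻¹, abs_nonneg K8]
  have hinv : ∀ K : ℝ, 0 < K → K⁻¹ ≤ D → D⁻¹ ≤ K := by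
    intro K hK h
    have h2 : D⁻¹ ≤ (K⁻¹)⁻¹ := inv_anti₀ (by positivity) h
    rwa [inv_inv] at h2
  have hup' : ∀ K T qv : ℝ, qv ≤ K * T → 0 ≤ T → K ≤ D → qv ≤ D * T :=
    fun K T qv h hT hK => h.trans (mul_le_mul_of_nonneg_right hK hT)
  have hlow' : ∀ K T qv : ℝ, K * T ≤ qv → 0 ≤ T → 0 < K → K⁻¹ ≤ D → D⁻¹ * T ≤ qv :=
    fun K T qv h hT hK hKD => (mul_le_mul_of_nonneg_right (hinv K hK hKD) hT).trans h
  have hm2 : (0:ℝ) < m / 2 := by linarith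
  have hK2pos : 0 < K2 := by
    rw [hK2]
    exact mul_pos (mul_pos hc hm2) (Real.rpow_pos_of_pos (by norm_num) _)
  have hK3pos : 0 < K3 := by
    rw [hK3]
    exact mul_pos (mul_pos hc hm2) (Real.rpow_pos_of_pos (by norm_num) _)
  have hK7pos : 0 < K7 := by
    rw [hK7]
    exact mul_pos (mul_pos hc (Real.rpow_pos_of_pos (by norm_num) _))
      (mul_pos hc₁ (Real.exp_pos _))
  refine ⟨D, hD1, ?_, ?_, ?_⟩
  · -- case (i)
    intro x y hx hxy hy5
    have hy : 0 < y := lt_of_lt_of_le hx hxy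
    have hxp : (0:ℝ) ≤ x ^ (-1 - α) := Real.rpow_nonneg hx.le _
    have hyxp : y ^ (-1-α) ≤ x ^ (-1-α) := Real.rpow_le_rpow_of_nonpos hx hxy hp0.le
    have h6x : ((6:ℝ)*x) ^ (-1-α) = (6:ℝ)^(-1-α) * x^(-1-α) :=
      Real.mul_rpow (by norm_num) hx.le
    have hcM : (0:ℝ) ≤ c * M := mul_nonneg hc.le hM0
    have hlow1 : K2 * x ^ (-1-α) ≤ q x y := by
      have h2 : ((6:ℝ)*x)^(-1-α) ≤ (x+y)^(-1-α) :=
        Real.rpow_le_rpow_of_nonpos (by linarith) (by linarith) hp0.le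
      calc K2 * x^(-1-α) = c*(m/2) * ((6:ℝ)^(-1-α) * x^(-1-α)) := by rw [hK2]; ring
      _ = c*(m/2) * ((6:ℝ)*x)^(-1-α) := by rw [h6x]
      _ ≤ c*(m/2) * (x+y)^(-1-α) := by
          apply mul_le_mul_of_nonneg_left h2
          positivity
      _ ≤ q x y := hL x y hx hy
    have hlow2 : K2 * x ^ (-1-α) ≤ q y x := by
      have h2 : ((6:ℝ)*x)^(-1-α) ≤ (y+x)^(-1-α) :=
        Real.rpow_le_rpow_of_nonpos (by linarith) (by linarith) hp0.le
      calc K2 * x^(-1-α) = c*(m/2) * ((6:ℝ)^(-1-α) * x^(-1-α)) := by rw [hK2]; ring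
      _ = c*(m/2) * ((6:ℝ)*x)^(-1-α) := by rw [h6x]
      _ ≤ c*(m/2) * (y+x)^(-1-α) := by
          apply mul_le_mul_of_nonneg_left h2
          positivity
      _ ≤ q y x := hL y x hy hx
    refine ⟨hlow' K2 _ _ hlow1 hxp hK2pos hK2D, ?_,
      hlow' K2 _ _ hlow2 hxp hK2pos hK2D, ?_⟩
    · refine hup' K1 _ _ ?_ hxp hK1D
      calc q x y ≤ c * M * y ^ (-1-α) := hU x y hx hy
      _ ≤ c * M * x ^ (-1-α) := mul_le_mul_of_nonneg_left hyxp hcM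
      _ = K1 * x ^ (-1-α) := by rw [hK1]
    · refine hup' K1 _ _ ?_ hxp hK1D
      calc q y x ≤ c * M * x ^ (-1-α) := hU y x hy hx
      _ = K1 * x ^ (-1-α) := by rw [hK1]
  · -- case (ii)
    intro x y hx h5
    have hy : 0 < y := lt_of_lt_of_le (by linarith) h5
    have hyp : (0:ℝ) ≤ y ^ (-1 - α) := Real.rpow_nonneg hy.le _
    have hlow1 : K3 * y ^ (-1-α) ≤ q x y := by
      have h2 : ((2:ℝ)*y)^(-1-α) ≤ (x+y)^(-1-α) :=
        Real.rpow_le_rpow_of_nonpos (by linarith) (by linarith) hp0.le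
      have h2y : ((2:ℝ)*y) ^ (-1-α) = (2:ℝ)^(-1-α) * y^(-1-α) :=
        Real.mul_rpow (by norm_num) hy.le
      calc K3 * y^(-1-α) = c*(m/2) * ((2:ℝ)^(-1-α) * y^(-1-α)) := by rw [hK3]; ring
      _ = c*(m/2) * ((2:ℝ)*y)^(-1-α) := by rw [h2y]
      _ ≤ c*(m/2) * (x+y)^(-1-α) := by
          apply mul_le_mul_of_nonneg_left h2
          positivity
      _ ≤ q x y := hL x y hx hy
    refine ⟨hlow' K3 _ _ hlow1 hyp hK3pos hK3D, ?_⟩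
    refine hup' K1 _ _ ?_ hyp hK1D
    calc q x y ≤ c * M * y ^ (-1-α) := hU x y hx hy
    _ = K1 * y ^ (-1-α) := by rw [hK1]
  · -- case (iii)
    intro x y hx h5
    have hy : 0 < y := lt_of_lt_of_le (by linarith) h5
    have hyp : (0:ℝ) ≤ y ^ (-1 - α) := Real.rpow_nonneg hy.le _
    obtain ⟨h_lt, h_eq, h_gt⟩ := hiii x y hx h5
    refine ⟨fun _ hblt => ?_, fun hbeq => ?_, fun hbgt => ?_⟩
    · -- β < 1
      have hT : (0:ℝ) ≤ y ^ (-1-α) * (y/x)^(1-β) := by positivity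
      have hK5pos : 0 < K5 := by
        have h51 : (5:ℝ) ^ (β-1) < 1 :=
          Real.rpow_lt_one_of_one_lt_of_neg (by norm_num) (by linarith)
        rw [hK5]
        exact mul_pos (mul_pos (mul_pos hc (Real.rpow_pos_of_pos (by norm_num) _))
          (mul_pos hc₁ (Real.exp_pos _))) (div_pos (by linarith) (by linarith))
      exact ⟨hlow' K5 _ _ (h_lt hblt).1 hT hK5pos hK5D,
        hup' K4 _ _ (h_lt hblt).2 hT hK4D⟩
    · -- β = 1
      have hT : (0:ℝ) ≤ y ^ (-1-α) * Real.log (y/x) := by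
        apply mul_nonneg hyp
        apply Real.log_nonneg
        rw [le_div_iff₀ hx]
        linarith
      exact ⟨hlow' K7 _ _ (h_eq hbeq).1 hT hK7pos hK7D,
        hup' K6 _ _ (h_eq hbeq).2 hT hK6D⟩
    · -- β > 1
      constructor
      · have hlow1 : K3 * y ^ (-1-α) ≤ q y x := by
          have h2 : ((2:ℝ)*y)^(-1-α) ≤ (y+x)^(-1-α) := by
            apply Real.rpow_le_rpow_of_nonpos (by linarith) (by linarith) hp0.le
          have h2y : ((2:ℝ)*y) ^ (-1-α) = (2:ℝ)^(-1-α) * y^(-1-α) :=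
            Real.mul_rpow (by norm_num) hy.le
          calc K3 * y^(-1-α) = c*(m/2) * ((2:ℝ)^(-1-α) * y^(-1-α)) := by rw [hK3]; ring
          _ = c*(m/2) * ((2:ℝ)*y)^(-1-α) := by rw [h2y]
          _ ≤ c*(m/2) * (y+x)^(-1-α) := by
              apply mul_le_mul_of_nonneg_left h2
              positivity
          _ ≤ q y x := hL y x hy hx
        exact hlow' K3 _ _ hlow1 hyp hK3pos hK3D
      · exact hup' K8 _ _ (h_gt hbgt) hyp hK8D
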